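/- arXiv:1001.3173 — 5 statements merged into one kernel-verified Lean document; each statement's English description precedes it below -/
import Mathlib

section
/- Let γ_s, γ_c > 0, p₁ ∈ (0,1) and K > 0. Then the sequence N ↦ E_NoCSIS(N,K) := (1/8)·N·K·γ_c·γ_s/(γ_c·(NK+1) + (p₁·γ_s + 1)·(K+1)) converges to γ_s/8 as N → ∞. -/
open Filter Topology

theorem stmt5_general (γs γc p₁ K : ℝ) (hγc : 0 < γc) (hK : 0 < K) :
    Tendsto (fun N : ℕ =>
        (1 / 8) * ((N : ℝ) * K * γc * γs /
          (γc * ((N : ℝ) * K + 1) + (p₁ * γs + 1) * (K + 1))))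
      atTop (nhds (γs / 8)) := by
  have hslope : γc * K ≠ 0 := by positivity
  have hratio := (tendsto_add_mul_div_add_mul_atTop_nhds 0 (γc + (p₁ * γs + 1) * (K + 1))
    (K * γc * γs) hslope).const_mul (1 / 8)
  have hlimit : 1 / 8 * (K * γc * γs / (γc * K)) = γs / 8 := by field_simp
  rw [hlimit] at hratio
  refine hratio.congr fun N => ?_
  congr 2 <;> ring

/-- As the number of antennas `N → ∞`, the no-CSIS error exponent
`E_NoCSIS(N,K) = (1/8)·N·K·γ_c·γ_s/(γ_c·(NK+1) + (p₁·γ_s + 1)·(K+1))` converges to `γ_s/8`. -/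
theorem stmt5 (γs γc p₁ K : ℝ) (hγs : 0 < γs) (hγc : 0 < γc)
    (hp₁ : p₁ ∈ Set.Ioo (0 : ℝ) 1) (hK : 0 < K) :
    Tendsto (fun N : ℕ =>
        (1 / 8) * ((N : ℝ) * K * γc * γs /
          (γc * ((N : ℝ) * K + 1) + (p₁ * γs + 1) * (K + 1))))
      atTop (nhds (γs / 8)) :=
  stmt5_general γs γc p₁ K hγc hK
end

section
/- Let L be a positive integer, h ∈ ℂ^L, and let a, b, P > 0. Then for every α ∈ ℂ^L with Σ_{i=1}^L |α_i|² ≤ P, we have |Σ_{i=1}^L α_i h_i|² / (a·Σ_{i=1}^L |α_i|²·|h_i|² + b) ≤ Σ_{l=1}^L P·|h_l|² / (a·P·|h_l|² + b). -/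
/-!
Weighted Cauchy–Schwarz with the weights `w_l = a‖h_l‖² + b/P` gives
`|Σ α_l h_l|² ≤ (Σ ‖α_l‖² w_l) (Σ ‖h_l‖² / w_l)`. The power constraint bounds the first factor
by the noise term `a Σ ‖α_l‖² ‖h_l‖² + b`, and the second factor is exactly the claimed optimum.
-/

open Finset

lemma norm_sum_mul_sq_le_weighted {ι R : Type*} [NonUnitalSeminormedRing R] (s : Finset ι)
    (x y : ι → R) {w : ι → ℝ} (hw : ∀ i ∈ s, 0 < w i) :
    ‖∑ i ∈ s, x i * y i‖ ^ 2 ≤ (∑ i ∈ s, ‖x i‖ ^ 2 * w i) * ∑ i ∈ s, ‖y i‖ ^ 2 / w i := by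
  have hnorm : ‖∑ i ∈ s, x i * y i‖ ≤ ∑ i ∈ s, ‖x i‖ * ‖y i‖ :=
    (norm_sum_le _ _).trans (sum_le_sum fun i _ => norm_mul_le _ _)
  calc ‖∑ i ∈ s, x i * y i‖ ^ 2 ≤ (∑ i ∈ s, ‖x i‖ * ‖y i‖) ^ 2 :=
        pow_le_pow_left₀ (norm_nonneg _) hnorm 2
    _ ≤ (∑ i ∈ s, ‖x i‖ ^ 2 * w i) * ∑ i ∈ s, ‖y i‖ ^ 2 / w i := by
        refine sum_sq_le_sum_mul_sum_of_sq_le_mul s (fun i hi => ?_) (fun i hi => ?_)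
          (fun i hi => le_of_eq ?_)
        · have := hw i hi; positivity
        · have := hw i hi; positivity
        · field_simp [(hw i hi).ne']

lemma sum_mul_add_div_le {ι : Type*} (s : Finset ι) (p q : ι → ℝ) {a b P : ℝ}
    (hb : 0 ≤ b) (hP : 0 < P) (hp : ∑ i ∈ s, p i ≤ P) :
    ∑ i ∈ s, p i * (a * q i + b / P) ≤ a * ∑ i ∈ s, p i * q i + b := by
  have hsplit : ∑ i ∈ s, p i * (a * q i + b / P)
      = a * ∑ i ∈ s, p i * q i + b / P * ∑ i ∈ s, p i := by
    simp only [mul_sum, ← sum_add_distrib]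
    exact sum_congr rfl fun i _ => by ring
  have hpower : b / P * ∑ i ∈ s, p i ≤ b := by
    calc b / P * ∑ i ∈ s, p i ≤ b / P * P := by gcongr
      _ = b := div_mul_cancel₀ b hP.ne'
  linarith

lemma mul_div_mul_add_eq_div_add_div {a b P x : ℝ} (hP : P ≠ 0) :
    P * x / (a * P * x + b) = x / (a * x + b / P) := by
  rw [show a * P * x + b = P * (a * x + b / P) by field_simp, mul_div_mul_left _ _ hP]

theorem stmt8_general (L : ℕ) (h : Fin L → ℂ) (a b P : ℝ)
    (ha : 0 < a) (hb : 0 < b) (hP : 0 < P)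
    (α : Fin L → ℂ) (hα : ∑ i, ‖α i‖ ^ 2 ≤ P) :
    ‖∑ i, α i * h i‖ ^ 2 /
        (a * ∑ i, ‖α i‖ ^ 2 * ‖h i‖ ^ 2 + b) ≤
      ∑ l, P * ‖h l‖ ^ 2 / (a * P * ‖h l‖ ^ 2 + b) := by
  rw [div_le_iff₀ (by positivity)]
  calc ‖∑ i, α i * h i‖ ^ 2
      ≤ (∑ i, ‖α i‖ ^ 2 * (a * ‖h i‖ ^ 2 + b / P)) *
          ∑ i, ‖h i‖ ^ 2 / (a * ‖h i‖ ^ 2 + b / P) :=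
        norm_sum_mul_sq_le_weighted _ _ _ fun i _ => by positivity
    _ ≤ (a * ∑ i, ‖α i‖ ^ 2 * ‖h i‖ ^ 2 + b) *
          ∑ i, ‖h i‖ ^ 2 / (a * ‖h i‖ ^ 2 + b / P) := by
        gcongr
        exact sum_mul_add_div_le _ _ _ hb.le hP hα
    _ = (∑ l, P * ‖h l‖ ^ 2 / (a * P * ‖h l‖ ^ 2 + b)) *
          (a * ∑ i, ‖α i‖ ^ 2 * ‖h i‖ ^ 2 + b) := by
        rw [mul_comm]
        simp only [mul_div_mul_add_eq_div_add_div hP.ne']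

/-- Upper bound for the single-antenna full-CSIS optimization: for every gain vector `α`
satisfying the power constraint `Σ|α_i|² ≤ P`, the generalized SNR is at most
`Σ_l P·|h_l|²/(a·P·|h_l|² + b)`. -/
theorem stmt8 (L : ℕ) (hL : 0 < L) (h : Fin L → ℂ) (a b P : ℝ)
    (ha : 0 < a) (hb : 0 < b) (hP : 0 < P)
    (α : Fin L → ℂ) (hα : ∑ i, ‖α i‖ ^ 2 ≤ P) :
    ‖∑ i, α i * h i‖ ^ 2 /
        (a * ∑ i, ‖α i‖ ^ 2 * ‖h i‖ ^ 2 + b) ≤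
      ∑ l, P * ‖h l‖ ^ 2 / (a * P * ‖h l‖ ^ 2 + b) :=
  stmt8_general L h a b P ha hb hP α hα
end

section
/- Let L be a positive integer, h ∈ ℂ^L with h ≠ 0, and let a, b, P > 0. Define c := √( P / Σ_{l=1}^L ( |h_l| / (a·P·|h_l|² + b) )² ) and α_i := c · conj(h_i) / (a·P·|h_i|² + b) for i = 1,…,L. Then Σ_{i=1}^L |α_i|² = P and |Σ_{i=1}^L α_i h_i|² / (a·Σ_{i=1}^L |α_i|²·|h_i|² + b) = Σ_{l=1}^L P·|h_l|² / (a·P·|h_l|² + b). -/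
/-!
Write `d_i = a·P·|h_i|² + b` and `Q = Σ_l |h_l|² / d_l`. Each `α_i h_i = c·|h_i|²/d_i` is real and
nonnegative, so the numerator is `c²Q²`. Weighting the power by `d_i` gives
`Σ_i |α_i|² d_i = c²Q`, and since `Σ_i |α_i|² = P` this weighted power is exactly `P` times the
denominator. Hence the ratio is `c²Q² / (c²Q/P) = P·Q`.
-/

open Finset ComplexConjugate

namespace Complex

lemma norm_ofReal_mul_conj_div_sq (c d : ℝ) (z : ℂ) :
    ‖(c : ℂ) * conj z / (d : ℂ)‖ ^ 2 = c ^ 2 * (‖z‖ / d) ^ 2 := by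
  rw [norm_div, norm_mul, norm_real, norm_conj, norm_real, Real.norm_eq_abs, Real.norm_eq_abs,
    div_pow, mul_pow, sq_abs, sq_abs, div_pow, mul_div_assoc]

lemma ofReal_mul_conj_div_mul_self (c d : ℝ) (z : ℂ) :
    (c : ℂ) * conj z / (d : ℂ) * z = ((c * (‖z‖ ^ 2 / d) : ℝ) : ℂ) := by
  rw [div_mul_eq_mul_div, mul_assoc, conj_mul']
  push_cast
  ring

end Complex

lemma Finset.sum_mul_mul_add {ι R : Type*} [CommSemiring R] (s : Finset ι) (x y : ι → R)
    (k b : R) :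
    ∑ i ∈ s, x i * (k * y i + b) = k * ∑ i ∈ s, x i * y i + b * ∑ i ∈ s, x i := by
  rw [mul_sum, mul_sum, ← sum_add_distrib]
  exact sum_congr rfl fun _ _ => by ring

section MatchedGains

variable {ι : Type*} [Fintype ι] {h α : ι → ℂ} {c : ℝ}

lemma sum_norm_sq_div_pos {d : ι → ℝ} (hh : h ≠ 0) (hd : ∀ i, 0 < d i) :
    0 < ∑ i, ‖h i‖ ^ 2 / d i := by
  obtain ⟨i, hi⟩ := Function.ne_iff.mp hh
  exact sum_pos' (fun j _ => div_nonneg (sq_nonneg _) (hd j).le)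
    ⟨i, mem_univ i, div_pos (pow_pos (norm_pos_iff.mpr hi) 2) (hd i)⟩

section

variable {d : ι → ℝ} (hα : ∀ i, α i = (c : ℂ) * conj (h i) / (d i : ℂ))
include hα

lemma sum_norm_sq_eq_of_matched :
    ∑ i, ‖α i‖ ^ 2 = c ^ 2 * ∑ i, (‖h i‖ / d i) ^ 2 := by
  simp only [hα, Complex.norm_ofReal_mul_conj_div_sq, mul_sum]

lemma sum_mul_eq_of_matched :
    ∑ i, α i * h i = ((c * ∑ i, ‖h i‖ ^ 2 / d i : ℝ) : ℂ) := by
  simp only [hα, Complex.ofReal_mul_conj_div_mul_self, mul_sum, Complex.ofReal_sum]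

lemma sum_norm_sq_mul_eq_of_matched (hd : ∀ i, d i ≠ 0) :
    ∑ i, ‖α i‖ ^ 2 * d i = c ^ 2 * ∑ i, ‖h i‖ ^ 2 / d i := by
  rw [mul_sum]
  refine sum_congr rfl fun i _ => ?_
  rw [hα, Complex.norm_ofReal_mul_conj_div_sq]
  field_simp [hd i]

end

lemma snr_eq_of_matched {a b P : ℝ} (hh : h ≠ 0)
    (hα : ∀ i, α i = (c : ℂ) * conj (h i) / ((a * P * ‖h i‖ ^ 2 + b : ℝ) : ℂ))
    (hd : ∀ i, 0 < a * P * ‖h i‖ ^ 2 + b) (hc : c ≠ 0) (hP : P ≠ 0)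
    (hpower : ∑ i, ‖α i‖ ^ 2 = P) :
    ‖∑ i, α i * h i‖ ^ 2 / (a * ∑ i, ‖α i‖ ^ 2 * ‖h i‖ ^ 2 + b) =
      ∑ i, P * ‖h i‖ ^ 2 / (a * P * ‖h i‖ ^ 2 + b) := by
  have hweighted := sum_norm_sq_mul_eq_of_matched hα fun i => (hd i).ne'
  rw [sum_mul_mul_add, hpower] at hweighted
  have hden : a * ∑ i, ‖α i‖ ^ 2 * ‖h i‖ ^ 2 + b =
      c ^ 2 * (∑ i, ‖h i‖ ^ 2 / (a * P * ‖h i‖ ^ 2 + b)) / P := by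
    rw [eq_div_iff hP, ← hweighted]
    ring
  rw [sum_mul_eq_of_matched hα, Complex.norm_real, Real.norm_eq_abs, sq_abs, hden]
  simp only [mul_div_assoc P, ← mul_sum]
  have hQ := sum_norm_sq_div_pos hh hd
  generalize ∑ i, ‖h i‖ ^ 2 / (a * P * ‖h i‖ ^ 2 + b) = Q at hQ ⊢
  field_simp

end MatchedGains

theorem stmt9_general (L : ℕ) (h : Fin L → ℂ) (hh : h ≠ 0) (a b P : ℝ)
    (ha : 0 < a) (hb : 0 < b) (hP : 0 < P)
    (c : ℝ)
    (hc : c = Real.sqrt (P / ∑ l, (‖h l‖ / (a * P * ‖h l‖ ^ 2 + b)) ^ 2))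
    (α : Fin L → ℂ)
    (hα : ∀ i, α i = (c : ℂ) * (starRingEnd ℂ) (h i) /
      ((a * P * ‖h i‖ ^ 2 + b : ℝ) : ℂ)) :
    (∑ i, ‖α i‖ ^ 2 = P) ∧
      ‖∑ i, α i * h i‖ ^ 2 /
          (a * ∑ i, ‖α i‖ ^ 2 * ‖h i‖ ^ 2 + b) =
        ∑ l, P * ‖h l‖ ^ 2 / (a * P * ‖h l‖ ^ 2 + b) := by
  have hd : ∀ i, 0 < a * P * ‖h i‖ ^ 2 + b := fun i => by positivity
  have hS : 0 < ∑ l, (‖h l‖ / (a * P * ‖h l‖ ^ 2 + b)) ^ 2 := by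
    simpa only [div_pow] using sum_norm_sq_div_pos hh fun i => pow_pos (hd i) 2
  have hc2 : c ^ 2 = P / ∑ l, (‖h l‖ / (a * P * ‖h l‖ ^ 2 + b)) ^ 2 :=
    hc ▸ Real.sq_sqrt (div_pos hP hS).le
  have hc0 : c ≠ 0 := hc ▸ Real.sqrt_ne_zero'.mpr (div_pos hP hS)
  have hpower : ∑ i, ‖α i‖ ^ 2 = P := by
    rw [sum_norm_sq_eq_of_matched hα, hc2, div_mul_cancel₀ _ hS.ne']
  exact ⟨hpower, snr_eq_of_matched hh hα hd hc0 hP.ne' hpower⟩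

/-- Achievability for the single-antenna full-CSIS optimization: the explicit sensor gains
`α_i = c·conj(h_i)/(a·P·|h_i|² + b)` with
`c = √(P / Σ_l (|h_l|/(a·P·|h_l|² + b))²)` satisfy the power constraint with equality and
attain the generalized SNR value `Σ_l P·|h_l|²/(a·P·|h_l|² + b)`. -/
theorem stmt9 (L : ℕ) (hL : 0 < L) (h : Fin L → ℂ) (hh : h ≠ 0) (a b P : ℝ)
    (ha : 0 < a) (hb : 0 < b) (hP : 0 < P)
    (c : ℝ)
    (hc : c = Real.sqrt (P / ∑ l, (‖h l‖ / (a * P * ‖h l‖ ^ 2 + b)) ^ 2))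
    (α : Fin L → ℂ)
    (hα : ∀ i, α i = (c : ℂ) * (starRingEnd ℂ) (h i) /
      ((a * P * ‖h i‖ ^ 2 + b : ℝ) : ℂ)) :
    (∑ i, ‖α i‖ ^ 2 = P) ∧
      ‖∑ i, α i * h i‖ ^ 2 /
          (a * ∑ i, ‖α i‖ ^ 2 * ‖h i‖ ^ 2 + b) =
        ∑ l, P * ‖h l‖ ^ 2 / (a * P * ‖h l‖ ^ 2 + b) :=
  stmt9_general L h hh a b P ha hb hP c hc α hα
end

section
/- Let (Ω, μ) be a probability space, let X : Ω → ℝ be integrable with X ≥ 0 almost everywhere and E[X] = 1, and let a, b, P > 0. Then E[ P·X / (a·P·X + b) ] ≥ (E[√X])² · P/(a·P + b). -/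
/-!
Write `√X = √(PX/(aPX + b)) · √((aPX + b)/P)` and apply Cauchy–Schwarz: the second factor
squared has mean `(aP + b)/P` because `E[X] = 1`, and the first factor squared is the
integrand on the right, bounded by `1/a` and hence integrable.
-/

open MeasureTheory

section

variable {Ω : Type*} [MeasurableSpace Ω] {μ : Measure Ω}

theorem memLp_two_sqrt {u : Ω → ℝ} (hu : Integrable u μ) (hu0 : 0 ≤ᵐ[μ] u) :
    MemLp (fun ω => √(u ω)) 2 μ := by
  have hm : AEStronglyMeasurable (fun ω => √(u ω)) μ :=
    (Real.continuous_sqrt.measurable.comp_aemeasurable hu.aemeasurable).aestronglyMeasurable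
  refine (memLp_two_iff_integrable_sq hm).2 (hu.congr ?_)
  filter_upwards [hu0] with ω hω
  exact (Real.sq_sqrt hω).symm

theorem sq_integral_sqrt_mul_le {u v : Ω → ℝ} (hu : Integrable u μ) (hv : Integrable v μ)
    (hu0 : 0 ≤ᵐ[μ] u) (hv0 : 0 ≤ᵐ[μ] v) :
    (∫ ω, √(u ω * v ω) ∂μ) ^ 2 ≤ (∫ ω, u ω ∂μ) * ∫ ω, v ω ∂μ := by
  have hsq {w : Ω → ℝ} (hw0 : 0 ≤ᵐ[μ] w) : ∫ ω, √(w ω) ^ (2 : ℝ) ∂μ = ∫ ω, w ω ∂μ := by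
    refine integral_congr_ae ?_
    filter_upwards [hw0] with ω hω
    rw [Real.rpow_two, Real.sq_sqrt hω]
  have holder := integral_mul_le_Lp_mul_Lq_of_nonneg Real.HolderConjugate.two_two
    (.of_forall fun ω => Real.sqrt_nonneg (u ω)) (.of_forall fun ω => Real.sqrt_nonneg (v ω))
    (by simpa using memLp_two_sqrt hu hu0) (by simpa using memLp_two_sqrt hv hv0)
  rw [hsq hu0, hsq hv0, ← Real.sqrt_eq_rpow, ← Real.sqrt_eq_rpow] at holder
  have hmul : ∫ ω, √(u ω * v ω) ∂μ = ∫ ω, √(u ω) * √(v ω) ∂μ := by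
    refine integral_congr_ae ?_
    filter_upwards [hu0] with ω hω
    exact Real.sqrt_mul hω _
  rw [hmul]
  calc (∫ ω, √(u ω) * √(v ω) ∂μ) ^ 2 ≤ (√(∫ ω, u ω ∂μ) * √(∫ ω, v ω ∂μ)) ^ 2 :=
        pow_le_pow_left₀ (integral_nonneg fun ω => by positivity) holder 2
    _ = (∫ ω, u ω ∂μ) * ∫ ω, v ω ∂μ := by
        rw [mul_pow, Real.sq_sqrt (integral_nonneg_of_ae hu0),
          Real.sq_sqrt (integral_nonneg_of_ae hv0)]

theorem integrable_mul_div_mul_add [IsFiniteMeasure μ] {X : Ω → ℝ} (hX : AEMeasurable X μ)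
    (hpos : ∀ᵐ ω ∂μ, 0 ≤ X ω) {a b P : ℝ} (ha : 0 < a) (hb : 0 < b) (hP : 0 < P) :
    Integrable (fun ω => P * X ω / (a * P * X ω + b)) μ := by
  refine Integrable.mono' (integrable_const a⁻¹)
    (by fun_prop : AEMeasurable _ μ).aestronglyMeasurable ?_
  filter_upwards [hpos] with ω hω
  have hden : 0 < a * P * X ω + b := by positivity
  rw [Real.norm_of_nonneg (by positivity), div_le_iff₀ hden]
  field_simp
  linarith

end

/-- Phase-only lower bound `E_PO(1) ≤ E_CSIS(1)`: if `X ≥ 0` a.e. with `E[X] = 1`, then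
`E[P·X/(a·P·X + b)] ≥ (E[√X])²·P/(a·P + b)`. -/
theorem stmt11 {Ω : Type*} [MeasurableSpace Ω] (μ : Measure Ω) [IsProbabilityMeasure μ]
    (X : Ω → ℝ) (hX : Integrable X μ) (hpos : ∀ᵐ ω ∂μ, 0 ≤ X ω)
    (hmean : ∫ ω, X ω ∂μ = 1) (a b P : ℝ) (ha : 0 < a) (hb : 0 < b) (hP : 0 < P) :
    (∫ ω, Real.sqrt (X ω) ∂μ) ^ 2 * (P / (a * P + b)) ≤
      ∫ ω, P * X ω / (a * P * X ω + b) ∂μ := by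
  set φ : Ω → ℝ := fun ω => P * X ω / (a * P * X ω + b)
  set ψ : Ω → ℝ := fun ω => (a * P * X ω + b) / P
  have hψ : Integrable ψ μ := ((hX.const_mul _).add (integrable_const b)).div_const P
  have hψ_mean : ∫ ω, ψ ω ∂μ = (a * P + b) / P := by
    simp only [ψ, integral_div, integral_add (hX.const_mul _) (integrable_const b),
      integral_const_mul, hmean, integral_const, probReal_univ, smul_eq_mul, one_mul, mul_one]
  have hφψ : ∀ᵐ ω ∂μ, √(φ ω * ψ ω) = √(X ω) := by
    filter_upwards [hpos] with ω hω
    have hden : 0 < a * P * X ω + b := by positivity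
    simp only [φ, ψ]
    congr 1
    field_simp
  have cauchy_schwarz := sq_integral_sqrt_mul_le
    (integrable_mul_div_mul_add hX.aemeasurable hpos ha hb hP) hψ
    (by filter_upwards [hpos] with ω hω; positivity)
    (by filter_upwards [hpos] with ω hω; positivity)
  rw [integral_congr_ae hφψ, hψ_mean] at cauchy_schwarz
  calc (∫ ω, √(X ω) ∂μ) ^ 2 * (P / (a * P + b))
      ≤ (∫ ω, φ ω ∂μ) * ((a * P + b) / P) * (P / (a * P + b)) := by gcongr
    _ = ∫ ω, φ ω ∂μ := by field_simp
end

section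
/- (Corollary 1, core inequality) Let N ≥ 1 be a real number (or positive integer), K ≥ 0 and z ≥ 0. Then min( N·(z+1)/(N·z+1), (z+1)·(N·K+1)/(K+1) ) ≤ (N²·K + 2·N − 1)/(N·(K+1)), with equality when z = (N−1)/(N·(N·K+1)). -/
/-!
The first argument of the `min` is `1 + (N - 1) / (N z + 1)`, decreasing in `z` on `z ≥ 0`, and
the second is linear and increasing in `z`. The two agree at `z₀ = (N - 1) / (N (N K + 1)) ≥ 0`,
with common value `(N² K + 2N - 1) / (N (K + 1))`; left of `z₀` the second argument is below
this value, right of `z₀` the first one is.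
-/

theorem min_le_of_antitoneOn_of_monotoneOn {α β : Type*} [LinearOrder α] [LinearOrder β]
    {f g : α → β} {c : α} (hf : AntitoneOn f (Set.Ici c)) (hg : MonotoneOn g (Set.Iic c))
    (hfg : f c = g c) (x : α) : min (f x) (g x) ≤ f c := by
  rcases le_total x c with hxc | hcx
  · calc min (f x) (g x) ≤ g x := min_le_right _ _
      _ ≤ g c := hg hxc le_rfl hxc
      _ = f c := hfg.symm
  · calc min (f x) (g x) ≤ f x := min_le_left _ _
      _ ≤ f c := hf le_rfl hcx hcx

namespace CSIGain

/-- The two arguments of the `min` bounding the gain `G_CSIS(N)`, with `z = γ_c / (p₁ γ_s + 1)`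
and `K` the Ricean factor. -/
noncomputable def snrBound (N z : ℝ) : ℝ := N * (z + 1) / (N * z + 1)

noncomputable def riceanBound (N K z : ℝ) : ℝ := (z + 1) * (N * K + 1) / (K + 1)

noncomputable def crossover (N K : ℝ) : ℝ := (N - 1) / (N * (N * K + 1))

noncomputable def gainBound (N K : ℝ) : ℝ := (N ^ 2 * K + 2 * N - 1) / (N * (K + 1))

variable {N K : ℝ}

theorem snrBound_antitoneOn (hN : 1 ≤ N) : AntitoneOn (snrBound N) (Set.Ici 0) := by
  intro a (ha : 0 ≤ a) b (hb : 0 ≤ b) hab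
  have hNa : 0 < N * a + 1 := by nlinarith
  have hNb : 0 < N * b + 1 := by nlinarith
  rw [snrBound, snrBound, div_le_div_iff₀ hNb hNa]
  nlinarith [mul_nonneg (sub_nonneg.2 hN) (sub_nonneg.2 hab)]

theorem riceanBound_monotone (hN : 0 ≤ N) (hK : 0 ≤ K) : Monotone (riceanBound N K) := by
  intro a b hab
  unfold riceanBound
  gcongr

theorem crossover_nonneg (hN : 1 ≤ N) (hK : 0 ≤ K) : 0 ≤ crossover N K := by
  unfold crossover
  have : 0 ≤ N - 1 := sub_nonneg.2 hN
  positivity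

theorem snrBound_crossover (hN : 0 < N) (hK : 0 ≤ K) :
    snrBound N (crossover N K) = gainBound N K := by
  unfold snrBound crossover gainBound
  have : 0 < N * K + 1 := by positivity
  have hden : N - 1 + (N * K + 1) = N * (K + 1) := by ring
  have : 0 < K + 1 := by positivity
  field_simp
  rw [hden]
  field_simp
  ring

theorem riceanBound_crossover (hN : 0 < N) (hK : 0 ≤ K) :
    riceanBound N K (crossover N K) = gainBound N K := by
  unfold riceanBound crossover gainBound
  have : 0 < N * K + 1 := by positivity
  have : 0 < K + 1 := by positivity
  field_simp
  ring

theorem min_snrBound_riceanBound_le (hN : 1 ≤ N) (hK : 0 ≤ K) (z : ℝ) :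
    min (snrBound N z) (riceanBound N K z) ≤ gainBound N K := by
  have hN0 : 0 < N := by linarith
  rw [← snrBound_crossover hN0 hK]
  refine min_le_of_antitoneOn_of_monotoneOn ?_ ((riceanBound_monotone hN0.le hK).monotoneOn _)
    (by rw [snrBound_crossover hN0 hK, riceanBound_crossover hN0 hK]) z
  exact (snrBound_antitoneOn hN).mono (Set.Ici_subset_Ici.2 (crossover_nonneg hN hK))

end CSIGain

open CSIGain in
theorem stmt14_general (N K z : ℝ) (hN : 1 ≤ N) (hK : 0 ≤ K) :
    min (N * (z + 1) / (N * z + 1)) ((z + 1) * (N * K + 1) / (K + 1)) ≤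
        (N ^ 2 * K + 2 * N - 1) / (N * (K + 1)) ∧
      (z = (N - 1) / (N * (N * K + 1)) →
        min (N * (z + 1) / (N * z + 1)) ((z + 1) * (N * K + 1) / (K + 1)) =
          (N ^ 2 * K + 2 * N - 1) / (N * (K + 1))) := by
  have hN0 : 0 < N := by linarith
  refine ⟨min_snrBound_riceanBound_le hN hK z, fun hz => ?_⟩
  have hsnr : snrBound N z = gainBound N K := hz ▸ snrBound_crossover hN0 hK
  have hrice : riceanBound N K z = gainBound N K := hz ▸ riceanBound_crossover hN0 hK
  simp only [snrBound, riceanBound, gainBound] at hsnr hrice ⊢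
  rw [hsnr, hrice, min_self]

/-- Corollary 1 core inequality: for `N ≥ 1`, `K ≥ 0`, `z ≥ 0`,
`min(N(z+1)/(Nz+1), (z+1)(NK+1)/(K+1)) ≤ (N²K + 2N − 1)/(N(K+1))`,
with equality when `z = (N−1)/(N(NK+1))`. -/
theorem stmt14 (N K z : ℝ) (hN : 1 ≤ N) (hK : 0 ≤ K) (hz : 0 ≤ z) :
    min (N * (z + 1) / (N * z + 1)) ((z + 1) * (N * K + 1) / (K + 1)) ≤
        (N ^ 2 * K + 2 * N - 1) / (N * (K + 1)) ∧
      (z = (N - 1) / (N * (N * K + 1)) →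
        min (N * (z + 1) / (N * z + 1)) ((z + 1) * (N * K + 1) / (K + 1)) =
          (N ^ 2 * K + 2 * N - 1) / (N * (K + 1))) :=
  stmt14_general N K z hN hK
end
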